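/- Let R be a random variable uniform on {0, 1}, let F be a finitely-valued random variable independent of R, and let M be a finitely-valued random variable, all on a finite probability space. Let G be a set of values of F with the following properties: for every f ∈ G with P(F = f) > 0, there is a function h_f such that h_f(M) = R almost surely on the event {F = f}; and for every f ∉ G with P(F = f) > 0, M and R are conditionally independent given F = f. Then the mutual information satisfies I(R : (F, M)) = P(F ∈ G) · log 2. -/

import Mathlib

/-!
Since `R` is a uniform bit, `I(R : (F, M)) = log 2 - (H(R, F, M) - H(F, M))`, and the entropy
difference splits into one term `-r₀ log r₀ - r₁ log r₁ + (r₀ + r₁) log (r₀ + r₁)` per value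
`(f, m)`, where `r_b = P(R = b, F = f, M = m)`. For `f ∈ G` the bit is determined by `m`, so one
of `r₀, r₁` vanishes and the term is `0`; for `f ∉ G`, conditional independence together with
the independence of `R` and `F` forces `r₀ = r₁`, and the term is `(r₀ + r₁) log 2`. Summing
gives `H(R, F, M) - H(F, M) = P(F ∉ G) log 2`.
-/

noncomputable section

def pr {Ω : Type*} [Fintype Ω] (p : Ω → ℝ) (E : Set Ω) : ℝ :=
  ∑ ω, E.indicator p ω

def distOf {Ω S : Type*} [Fintype Ω] (p : Ω → ℝ) (X : Ω → S) (s : S) : ℝ :=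
  pr p {ω | X ω = s}

def entH {Ω S : Type*} [Fintype Ω] [Fintype S] (p : Ω → ℝ) (X : Ω → S) : ℝ :=
  ∑ s, Real.negMulLog (distOf p X s)

def mi {Ω S T : Type*} [Fintype Ω] [Fintype S] [Fintype T]
    (p : Ω → ℝ) (X : Ω → S) (Y : Ω → T) : ℝ :=
  entH p X + entH p Y - entH p (fun ω => (X ω, Y ω))

open Real

section Probability

variable {Ω : Type*} [Fintype Ω] {p : Ω → ℝ}

lemma pr_congr {E E' : Set Ω} (h : ∀ ω, ω ∈ E ↔ ω ∈ E') : pr p E = pr p E' := by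
  rw [Set.ext h]

lemma pr_nonneg (hp0 : ∀ ω, 0 ≤ p ω) (E : Set Ω) : 0 ≤ pr p E :=
  Finset.sum_nonneg fun ω _ => Set.indicator_nonneg (fun ω _ => hp0 ω) ω

lemma pr_mono (hp0 : ∀ ω, 0 ≤ p ω) {E E' : Set Ω} (h : E ⊆ E') : pr p E ≤ pr p E' :=
  Finset.sum_le_sum fun ω _ => Set.indicator_le_indicator_of_subset h (fun ω => hp0 ω) ω

lemma pr_eq_zero_of_forall (E : Set Ω) (h : ∀ ω ∈ E, p ω = 0) : pr p E = 0 :=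
  Finset.sum_eq_zero fun ω _ => Set.indicator_apply_eq_zero.2 (h ω)

lemma pr_add_pr_compl (E : Set Ω) : pr p E + pr p Eᶜ = ∑ ω, p ω := by
  simp only [pr, ← Finset.sum_add_distrib, Set.indicator_self_add_compl_apply]

lemma pr_eq_sum_pr_inter {S : Type*} [Fintype S] (E : Set Ω) (X : Ω → S) :
    pr p E = ∑ s, pr p {ω | X ω = s ∧ ω ∈ E} := by
  classical
  simp only [pr, Set.indicator_apply]
  rw [Finset.sum_comm]
  refine Finset.sum_congr rfl fun ω _ => ?_
  by_cases hE : ω ∈ E <;> simp [hE]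

lemma pr_preimage_eq_sum_indicator_distOf {T : Type*} [Fintype T] (Y : Ω → T) (S : Set T) :
    pr p (Y ⁻¹' S) = ∑ y, S.indicator (distOf p Y) y := by
  rw [pr_eq_sum_pr_inter _ Y]
  refine Finset.sum_congr rfl fun y _ => ?_
  by_cases hy : y ∈ S
  · rw [Set.indicator_of_mem hy]
    exact pr_congr fun ω =>
      ⟨fun h => h.1, fun h => ⟨h, by rw [Set.mem_preimage, show Y ω = y from h]; exact hy⟩⟩
  · rw [Set.indicator_of_notMem hy]
    exact pr_eq_zero_of_forall _ fun ω ⟨h, hS⟩ => absurd (h ▸ hS) hy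

lemma pr_bool_add {T : Type*} (R : Ω → Bool) (Y : Ω → T) (y : T) :
    pr p {ω | R ω = true ∧ Y ω = y} + pr p {ω | R ω = false ∧ Y ω = y} = distOf p Y y := by
  rw [distOf, pr_eq_sum_pr_inter {ω | Y ω = y} R, Fintype.sum_bool]
  rfl

lemma pr_eq_zero_of_ae_eq {T : Type*} (R : Ω → Bool) (Y : Ω → T) (y : T) (b : Bool)
    (h : ∀ ω, p ω ≠ 0 → Y ω = y → R ω = b) : pr p {ω | R ω = !b ∧ Y ω = y} = 0 :=
  pr_eq_zero_of_forall _ fun ω ⟨hR, hY⟩ => by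
    by_contra hp
    simp [h ω hp hY] at hR

end Probability

section Entropy

variable {Ω : Type*} [Fintype Ω] {p : Ω → ℝ}

lemma entH_eq_log_two_of_uniform (R : Ω → Bool) (hR : ∀ b, pr p {ω | R ω = b} = 1 / 2) :
    entH p R = log 2 := by
  simp only [entH, distOf, Fintype.sum_bool, hR, negMulLog, one_div, log_inv]
  ring

lemma entH_bool_pair_sub_entH {T : Type*} [Fintype T] (R : Ω → Bool) (Y : Ω → T) :
    entH p (fun ω => (R ω, Y ω)) - entH p Y =
      ∑ y, (negMulLog (pr p {ω | R ω = true ∧ Y ω = y})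
        + negMulLog (pr p {ω | R ω = false ∧ Y ω = y}) - negMulLog (distOf p Y y)) := by
  simp only [entH, Fintype.sum_prod_type, Fintype.sum_bool, ← Finset.sum_add_distrib,
    ← Finset.sum_sub_distrib]
  refine Finset.sum_congr rfl fun y _ => ?_
  simp only [distOf, Prod.mk.injEq]

lemma negMulLog_add_negMulLog_sub_of_eq_zero {a b : ℝ} (h : a = 0 ∨ b = 0) :
    negMulLog a + negMulLog b - negMulLog (a + b) = 0 := by
  rcases h with rfl | rfl <;> simp

lemma negMulLog_half_add_negMulLog_half_sub (x : ℝ) :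
    negMulLog (x / 2) + negMulLog (x / 2) - negMulLog x = x * log 2 := by
  rcases eq_or_ne x 0 with rfl | hx
  · simp
  · simp only [negMulLog, log_div hx two_ne_zero]
    ring

end Entropy

section Heralded

variable {Ω FV MV : Type*} [Fintype Ω] {p : Ω → ℝ} {R : Ω → Bool} {F : Ω → FV} {M : Ω → MV}

lemma pr_eq_half_of_condIndep (hR : ∀ b, pr p {ω | R ω = b} = 1 / 2)
    (hRF : ∀ b f, pr p {ω | R ω = b ∧ F ω = f} = pr p {ω | R ω = b} * pr p {ω | F ω = f})
    {f : FV} (hf : 0 < pr p {ω | F ω = f}) (m : MV) (b : Bool)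
    (hci : pr p {ω | M ω = m ∧ R ω = b ∧ F ω = f} * pr p {ω | F ω = f} =
      pr p {ω | M ω = m ∧ F ω = f} * pr p {ω | R ω = b ∧ F ω = f}) :
    pr p {ω | R ω = b ∧ (F ω, M ω) = (f, m)} = distOf p (fun ω => (F ω, M ω)) (f, m) / 2 := by
  rw [hRF, hR] at hci
  have hjoint : pr p {ω | R ω = b ∧ (F ω, M ω) = (f, m)} =
      pr p {ω | M ω = m ∧ R ω = b ∧ F ω = f} :=
    pr_congr fun ω => by simp only [Set.mem_ofPred_eq, Prod.mk.injEq]; tauto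
  have hmarg : distOf p (fun ω => (F ω, M ω)) (f, m) = pr p {ω | M ω = m ∧ F ω = f} :=
    pr_congr fun ω => by simp only [Set.mem_ofPred_eq, Prod.mk.injEq]; tauto
  rw [hjoint, hmarg]
  refine mul_right_cancel₀ hf.ne' ?_
  rw [hci]
  ring

open Classical in
lemma heralded_entropy_term (hp0 : ∀ ω, 0 ≤ p ω) (hR : ∀ b, pr p {ω | R ω = b} = 1 / 2)
    (hRF : ∀ b f, pr p {ω | R ω = b ∧ F ω = f} = pr p {ω | R ω = b} * pr p {ω | F ω = f})
    (G : Set FV)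
    (hG : ∀ f ∈ G, 0 < pr p {ω | F ω = f} →
      ∃ h : MV → Bool, ∀ ω, p ω ≠ 0 → F ω = f → h (M ω) = R ω)
    (hGc : ∀ f ∉ G, 0 < pr p {ω | F ω = f} →
      ∀ (m : MV) (b : Bool),
        pr p {ω | M ω = m ∧ R ω = b ∧ F ω = f} * pr p {ω | F ω = f} =
          pr p {ω | M ω = m ∧ F ω = f} * pr p {ω | R ω = b ∧ F ω = f})
    (f : FV) (m : MV) :
    negMulLog (pr p {ω | R ω = true ∧ (F ω, M ω) = (f, m)})
      + negMulLog (pr p {ω | R ω = false ∧ (F ω, M ω) = (f, m)})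
      - negMulLog (distOf p (fun ω => (F ω, M ω)) (f, m)) =
      if f ∈ G then 0 else distOf p (fun ω => (F ω, M ω)) (f, m) * log 2 := by
  rcases (pr_nonneg hp0 {ω | F ω = f}).eq_or_lt with hnull | hpos
  · have hzero : ∀ b, pr p {ω | R ω = b ∧ (F ω, M ω) = (f, m)} = 0 := fun b =>
      le_antisymm (hnull ▸ pr_mono hp0 fun ω hω => (Prod.mk.inj hω.2).1) (pr_nonneg hp0 _)
    rw [← pr_bool_add R, hzero, hzero]
    simp
  by_cases hfG : f ∈ G
  · obtain ⟨h, hh⟩ := hG f hfG hpos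
    have hzero := pr_eq_zero_of_ae_eq R (fun ω => (F ω, M ω)) (f, m) (h m) fun ω hp hY => by
      obtain ⟨hF, hM⟩ := Prod.mk.inj hY
      rw [← hh ω hp hF, hM]
    rw [if_pos hfG, ← pr_bool_add R]
    apply negMulLog_add_negMulLog_sub_of_eq_zero
    cases hb : h m <;> rw [hb] at hzero
    · exact Or.inl hzero
    · exact Or.inr hzero
  · rw [if_neg hfG, pr_eq_half_of_condIndep hR hRF hpos m true (hGc f hfG hpos m true),
      pr_eq_half_of_condIndep hR hRF hpos m false (hGc f hfG hpos m false)]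
    exact negMulLog_half_add_negMulLog_half_sub _

end Heralded

/-- The input–output mutual information of the heralded channel equals the probability that
the flag lies in the "good" set `G` times `log 2`. -/
theorem heralded_mutual_information
    {Ω FV MV : Type*} [Fintype Ω] [Fintype FV] [Fintype MV]
    (p : Ω → ℝ) (hp0 : ∀ ω, 0 ≤ p ω) (hp1 : ∑ ω, p ω = 1)
    (R : Ω → Bool) (F : Ω → FV) (M : Ω → MV)
    (hR : ∀ b, pr p {ω | R ω = b} = 1 / 2)
    (hRF : ∀ (b : Bool) (f : FV),
      pr p {ω | R ω = b ∧ F ω = f} = pr p {ω | R ω = b} * pr p {ω | F ω = f})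
    (G : Set FV)
    (hG : ∀ f ∈ G, 0 < pr p {ω | F ω = f} →
      ∃ h : MV → Bool, ∀ ω, p ω ≠ 0 → F ω = f → h (M ω) = R ω)
    (hGc : ∀ f ∉ G, 0 < pr p {ω | F ω = f} →
      ∀ (m : MV) (b : Bool),
        pr p {ω | M ω = m ∧ R ω = b ∧ F ω = f} * pr p {ω | F ω = f} =
          pr p {ω | M ω = m ∧ F ω = f} * pr p {ω | R ω = b ∧ F ω = f}) :
    mi p R (fun ω => (F ω, M ω)) = pr p {ω | F ω ∈ G} * Real.log 2 := by
  classical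
  have hcond : entH p (fun ω => (R ω, F ω, M ω)) - entH p (fun ω => (F ω, M ω)) =
      pr p {ω | F ω ∈ G}ᶜ * log 2 := by
    rw [entH_bool_pair_sub_entH, show {ω | F ω ∈ G}ᶜ = (fun ω => (F ω, M ω)) ⁻¹' {y | y.1 ∉ G}
      from rfl, pr_preimage_eq_sum_indicator_distOf, Finset.sum_mul]
    refine Fintype.sum_congr _ _ fun ⟨f, m⟩ => ?_
    rw [heralded_entropy_term hp0 hR hRF G hG hGc f m]
    by_cases hf : f ∈ G <;> simp [hf]
  have htotal : pr p {ω | F ω ∈ G} + pr p {ω | F ω ∈ G}ᶜ = 1 := by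
    rw [pr_add_pr_compl, hp1]
  rw [mi, entH_eq_log_two_of_uniform R hR]
  linear_combination -hcond - log 2 * htotal

end
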